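/- Let p be a prime and let K be an algebraically closed field of characteristic zero equipped with a multiplicative nonarchimedean absolute value such that |p| < 1. Then the p-th power map u ↦ u^p is a surjective group endomorphism of the group of 1-units U₁ = {u ∈ K : |u − 1| < 1}, and its kernel is exactly the group μ_p of p-th roots of unity in K (a cyclic group of order p contained in U₁). In particular, every 1-unit u admits a sequence (u_n)_{n≥0} of 1-units with u_0 = u and u_{n+1}^p = u_n for all n. (This is the multiplicative content, via the Artin–Hasse exponential, of the paper's Proposition 9.14 giving the exact sequence 0 → T_p(G) → G(O_{C_p^♭}) → G(O_K) → 0.) -/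

import Mathlib

open IsUltrametricDist in
/-- Key ultrametric lemma: if `‖x‖ ≤ 1` and `‖(1+x)^p - 1‖ < 1`, then `‖x‖ < 1`. -/
lemma aux_one_unit {K : Type*} [NormedField K] [IsUltrametricDist K]
    {p : ℕ} (hp : p.Prime) (hpK : ‖(p : K)‖ < 1) {x : K} (hx : ‖x‖ ≤ 1)
    (h : ‖(1 + x) ^ p - 1‖ < 1) : ‖x‖ < 1 := by
  have hp0 : p ≠ 0 := hp.ne_zero
  have hmid : ‖(1 + x) ^ p - 1 - x ^ p‖ ≤ ‖(p : K)‖ := by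
    have hexp : (1 + x) ^ p - 1 - x ^ p = ∑ k ∈ Finset.Ioo 0 p, x ^ k * (p.choose k : K) := by
      rw [add_comm (1:K) x, add_pow]
      rw [show Finset.range (p + 1) = insert 0 (insert p (Finset.Ioo 0 p)) by
        ext k
        simp only [Finset.mem_range, Finset.mem_insert, Finset.mem_Ioo]
        omega]
      rw [Finset.sum_insert (by simp [Finset.mem_Ioo]; omega),
        Finset.sum_insert (by simp [Finset.mem_Ioo])]
      simp only [pow_zero, one_pow, Nat.choose_self, Nat.choose_zero_right, Nat.cast_one,
        one_mul, mul_one, Nat.sub_self]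
      ring
    rw [hexp]
    refine norm_sum_le_of_forall_le_of_nonneg (norm_nonneg _) fun k hk => ?_
    simp only [Finset.mem_Ioo] at hk
    obtain ⟨m, hm⟩ := hp.dvd_choose_self (by omega) hk.2
    rw [norm_mul, hm, Nat.cast_mul, norm_mul]
    calc ‖x ^ k‖ * (‖(p : K)‖ * ‖(m : K)‖)
        ≤ 1 * (‖(p : K)‖ * 1) := by
          gcongr
          · rw [norm_pow]
            exact pow_le_one₀ (norm_nonneg x) hx
          · exact norm_natCast_le_one K m
      _ = ‖(p : K)‖ := by ring
  have hxp : ‖x ^ p‖ < 1 := by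
    have hr : x ^ p = ((1 + x) ^ p - 1) + -((1 + x) ^ p - 1 - x ^ p) := by ring
    rw [hr]
    refine (norm_add_le_max _ _).trans_lt (max_lt h ?_)
    rw [norm_neg]
    exact hmid.trans_lt hpK
  rw [norm_pow] at hxp
  by_contra hcon
  push_neg at hcon
  exact absurd hxp (not_lt.mpr (one_le_pow₀ hcon))

/-- Norm-one elements close to 1: setup for the surjectivity argument. -/
lemma aux_root_one_unit {K : Type*} [NormedField K] [IsUltrametricDist K]
    {p : ℕ} (hp : p.Prime) (hpK : ‖(p : K)‖ < 1) {u v : K}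
    (hu : ‖u - 1‖ < 1) (hv : v ^ p = u) : ‖v - 1‖ < 1 := by
  have hu1 : ‖u‖ = 1 := by
    have hle : ‖u‖ ≤ 1 := by
      have h2 := IsUltrametricDist.norm_add_le_max (u - 1) 1
      simp only [sub_add_cancel, norm_one] at h2
      exact h2.trans (max_le hu.le le_rfl)
    rcases lt_or_eq_of_le hle with hlt | heq
    · exfalso
      have h3 : ‖(1:K)‖ ≤ max ‖(1:K) - u‖ ‖u‖ := by
        simpa using IsUltrametricDist.norm_add_le_max (1 - u) u
      rw [norm_one] at h3
      rw [norm_sub_rev] at hu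
      exact absurd h3 (not_le.mpr (max_lt hu hlt))
    · exact heq
  have hvp : ‖v‖ ^ p = 1 := by rw [← norm_pow, hv, hu1]
  have hv1 : ‖v‖ = 1 := by
    rcases lt_trichotomy ‖v‖ 1 with h1 | h1 | h1
    · exact absurd hvp (by have := pow_lt_one₀ (norm_nonneg v) h1 hp.ne_zero; linarith)
    · exact h1
    · exact absurd hvp (by have := one_lt_pow₀ h1 hp.ne_zero; linarith)
  have hle : ‖v - 1‖ ≤ 1 := by
    have h2 := IsUltrametricDist.norm_add_le_max v (-1)
    simp only [← sub_eq_add_neg, norm_neg, norm_one, hv1] at h2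
    simpa using h2
  have := aux_one_unit hp hpK (x := v - 1) hle (by
    rw [show (1 : K) + (v - 1) = v by ring, hv]
    exact hu)
  exact this

/-- Let `p` be a prime and let `K` be an algebraically closed field of characteristic zero
equipped with a multiplicative nonarchimedean absolute value such that `‖p‖ < 1`.  Then the
`p`-th power map `u ↦ u ^ p` is a surjective endomorphism of the group of `1`-units
`U₁ = {u : K | ‖u - 1‖ < 1}`, its kernel is exactly the group `μ_p` of `p`-th roots of
unity in `K` (a group of order `p`, contained in `U₁`), and in particular every `1`-unit
`u` admits a sequence `(u_n)` of `1`-units with `u_0 = u` and `u_{n+1} ^ p = u_n`. -/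
theorem pth_power_surjective_on_one_units
    (p : ℕ) (hp : p.Prime) (K : Type*) [NormedField K] [IsUltrametricDist K]
    [IsAlgClosed K] [CharZero K] (hpK : ‖(p : K)‖ < 1) :
    (∀ u : K, ‖u - 1‖ < 1 → ∃ v : K, ‖v - 1‖ < 1 ∧ v ^ p = u) ∧
    (∀ ζ : K, ζ ^ p = 1 → ‖ζ - 1‖ < 1) ∧
    ({ζ : K | ζ ^ p = 1}.ncard = p) ∧
    (∀ u : K, ‖u - 1‖ < 1 →
      ∃ s : ℕ → K, s 0 = u ∧ (∀ n, ‖s n - 1‖ < 1) ∧ ∀ n, (s (n + 1)) ^ p = s n) := by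
  have surj : ∀ u : K, ‖u - 1‖ < 1 → ∃ v : K, ‖v - 1‖ < 1 ∧ v ^ p = u := by
    intro u hu
    obtain ⟨v, hv⟩ := IsAlgClosed.exists_pow_nat_eq u hp.pos
    exact ⟨v, aux_root_one_unit hp hpK hu hv, hv⟩
  refine ⟨surj, ?_, ?_, ?_⟩
  · intro ζ hζ
    exact aux_root_one_unit hp hpK (u := 1) (by simp) hζ
  · haveI : NeZero ((p : ℕ) : K) := ⟨Nat.cast_ne_zero.mpr hp.ne_zero⟩
    obtain ⟨ζ, hζ⟩ := HasEnoughRootsOfUnity.exists_primitiveRoot K p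
    have hset : {ζ : K | ζ ^ p = 1} = ↑(Polynomial.nthRootsFinset p (1 : K)) := by
      ext η
      simp [Polynomial.mem_nthRootsFinset hp.pos]
    rw [hset, Set.ncard_coe_finset, hζ.card_nthRootsFinset]
  · intro u hu
    classical
    let T := {v : K // ‖v - 1‖ < 1}
    let f : T → T := fun x => ⟨(surj x.1 x.2).choose, (surj x.1 x.2).choose_spec.1⟩
    have hf : ∀ x : T, (f x).1 ^ p = x.1 := fun x => (surj x.1 x.2).choose_spec.2
    let t : ℕ → T := fun n => Nat.rec ⟨u, hu⟩ (fun _ x => f x) n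
    refine ⟨fun n => (t n).1, rfl, fun n => (t n).2, fun n => hf (t n)⟩
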